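/- Let (S, Σ, {τ_a : a ∈ L}) be an LMP and Σ₀ ⊆ Σ a sub-σ-algebra such that R(Σ₀) = R^T(Σ₀); set Σ_α := G^α(Σ₀). Then for every limit ordinal λ, R(Σ_λ) = R^T(Σ_λ). -/

import Mathlib

open MeasureTheory

/-- A labelled Markov process over the measurable space `S` with label set `L`:
each `τ a` is a Markov kernel, i.e. `τ a s` is a subprobability measure for each state `s`,
and `s ↦ τ a s E` is measurable for each measurable `E`. -/
structure LMP (S : Type*) (L : Type*) [MeasurableSpace S] where
  τ : L → S → Measure S
  prob_le_one : ∀ (a : L) (s : S), τ a s Set.univ ≤ 1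
  measurable_eval : ∀ (a : L) (E : Set S), MeasurableSet E → Measurable fun s => τ a s E

namespace LMP

variable {S L : Type*} [MeasurableSpace S]

/-- `A` is `R`-closed: anything related to a point of `A` lies in `A`. -/
def RClosed (R : Set (S × S)) (A : Set S) : Prop :=
  ∀ ⦃x⦄, x ∈ A → ∀ ⦃s⦄, (x, s) ∈ R → s ∈ A

/-- `Σ(R)`: the family of measurable `R`-closed sets. -/
def sigmaCl (R : Set (S × S)) : Set (Set S) :=
  {A | MeasurableSet A ∧ RClosed R A}

/-- `R(Λ)`: the relation identifying states belonging to exactly the same members of `Λ`. -/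
def rel (Λ : Set (Set S)) : Set (S × S) :=
  {p | ∀ A ∈ Λ, p.1 ∈ A ↔ p.2 ∈ A}

/-- `R^T(Λ)`: states assigning the same probabilities to every member of `Λ`, for all labels. -/
def relT (M : LMP S L) (Λ : Set (Set S)) : Set (S × S) :=
  {p | ∀ (a : L), ∀ E ∈ Λ, M.τ a p.1 E = M.τ a p.2 E}

/-- The operator `𝒪`. -/
def Oop (M : LMP S L) (R : Set (S × S)) : Set (S × S) :=
  M.relT (sigmaCl R)

/-- The operator `𝒢`. -/
def Gop (M : LMP S L) (Λ : Set (Set S)) : Set (Set S) :=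
  sigmaCl (M.relT Λ)

/-- The members of the σ-algebra generated by a family of sets. -/
def sigmaGen (U : Set (Set S)) : Set (Set S) :=
  {A | MeasurableSet[MeasurableSpace.generateFrom U] A}

/-- Transfinite iterates of `𝒪`. -/
noncomputable def Oiter (M : LMP S L) (R : Set (S × S)) (α : Ordinal) : Set (S × S) :=
  Ordinal.limitRecOn α R (fun _ prev => M.Oop prev)
    (fun o _ ih => ⋂ (o' : Ordinal) (h : o' < o), ih o' h)

/-- Transfinite iterates of `𝒢`. -/
noncomputable def Giter (M : LMP S L) (Λ : Set (Set S)) (α : Ordinal) : Set (Set S) :=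
  Ordinal.limitRecOn α Λ (fun _ prev => M.Gop prev)
    (fun o _ ih => sigmaGen (⋃ (o' : Ordinal) (h : o' < o), ih o' h))

/-- `Λ` is a sub-σ-algebra of the ambient σ-algebra. -/
structure IsSubSigmaAlgebra (Λ : Set (Set S)) : Prop where
  subset_meas : ∀ A ∈ Λ, MeasurableSet A
  empty_mem : (∅ : Set S) ∈ Λ
  compl_mem : ∀ A ∈ Λ, Aᶜ ∈ Λ
  iUnion_mem : ∀ f : ℕ → Set S, (∀ n, f n ∈ Λ) → (⋃ n, f n) ∈ Λ

/-- A family `Λ` is stable w.r.t. the process. -/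
def Stable (M : LMP S L) (Λ : Set (Set S)) : Prop :=
  ∀ A ∈ Λ, ∀ q : ℚ, 0 ≤ q → q ≤ 1 → ∀ a : L,
    {s : S | ENNReal.ofReal (q : ℝ) < M.τ a s A} ∈ Λ

/-- A state bisimulation: a symmetric relation such that related states agree on
all measurable `R`-closed sets. -/
def IsStateBisim (M : LMP S L) (R : Set (S × S)) : Prop :=
  (∀ p ∈ R, (p.2, p.1) ∈ R) ∧
    ∀ p ∈ R, ∀ (a : L), ∀ C ∈ sigmaCl R, M.τ a p.1 C = M.τ a p.2 C

/-- State bisimilarity. -/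
def stateBisim (M : LMP S L) : Set (S × S) :=
  {p | ∃ R, M.IsStateBisim R ∧ p ∈ R}

/-- Event bisimilarity: related by `R(Λ)` for some stable sub-σ-algebra `Λ`. -/
def eventBisim (M : LMP S L) : Set (S × S) :=
  {p | ∃ Λ : Set (Set S), IsSubSigmaAlgebra Λ ∧ M.Stable Λ ∧ p ∈ rel Λ}

/-- Formulas of the modal logic `𝓛`. -/
inductive LForm (L : Type*) : Type _
  | top : LForm L
  | and : LForm L → LForm L → LForm L
  | dia : L → {q : ℚ // 0 ≤ q ∧ q < 1} → LForm L → LForm L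

/-- Semantics of the logic `𝓛`. -/
def sem (M : LMP S L) : LForm L → Set S
  | LForm.top => Set.univ
  | LForm.and φ ψ => M.sem φ ∩ M.sem ψ
  | LForm.dia a q φ => {s | ENNReal.ofReal ((q : ℚ) : ℝ) < M.τ a s (M.sem φ)}

/-- `σ(⟦𝓛⟧)`: the σ-algebra generated by the sets definable in the logic. -/
def sigmaLogic (M : LMP S L) : Set (Set S) :=
  sigmaGen (Set.range M.sem)

end LMP

/-!
`𝒢(Λ)` contains the level sets `{s | c < τ_a(s, E)}` for measurable `E ∈ Λ`, so
`R(𝒢(Λ)) = R^T(Λ)`. The hypothesis on `Σ₀` gives `Σ₀ ⊆ 𝒢(Σ₀)`, and since `𝒢` is monotone the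
iterates `Σ_α` increase. At a limit `λ`, put `U = ⋃_{β<λ} Σ_β`: then
`R(U) = ⋂_{β<λ} R(Σ_{β+1}) = ⋂_{β<λ} R^T(Σ_β) = R^T(U)`. Passing from `U` to `Σ_λ = σ(U)`
changes neither side: not `R`, trivially, and not `R^T` by the π-λ theorem, since `U` is the
union of a chain of σ-algebras and the kernels are finite measures.
-/

open MeasureTheory MeasurableSpace Set

namespace LMP

universe u

variable {S L : Type*}

lemma RClosed.compl {R : Set (S × S)} (hR : ∀ ⦃s t⦄, (s, t) ∈ R → (t, s) ∈ R) {A : Set S}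
    (hA : RClosed R A) : RClosed R Aᶜ :=
  fun _ hx _ hxs hs => hx (hA hs (hR hxs))

lemma rel_anti : Antitone (rel : Set (Set S) → Set (S × S)) :=
  fun _ _ h _ hp A hA => hp A (h hA)

lemma rel_sigmaGen (U : Set (Set S)) : rel (sigmaGen U) = rel U := by
  refine (rel_anti fun A => measurableSet_generateFrom).antisymm ?_
  rintro ⟨s, t⟩ hst A hA
  induction A, hA using generateFrom_induction with
  | hC B hB => exact hst B hB
  | empty => simp
  | compl B _ hB => exact not_congr hB
  | iUnion f _ hf => simpa only [mem_iUnion] using exists_congr hf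

variable [MeasurableSpace S]

section Iterates

variable (M : LMP S L) (Λ : Set (Set S))

lemma Giter_zero : M.Giter Λ 0 = Λ :=
  Ordinal.limitRecOn_zero ..

lemma Giter_succ (α : Ordinal) : M.Giter Λ (α + 1) = M.Gop (M.Giter Λ α) :=
  Ordinal.limitRecOn_add_one ..

lemma Giter_of_isSuccLimit {α : Ordinal} (hα : Order.IsSuccLimit α) :
    M.Giter Λ α = sigmaGen (⋃ β < α, M.Giter Λ β) :=
  Ordinal.limitRecOn_limit _ _ _ _ hα

end Iterates

namespace IsSubSigmaAlgebra

variable {Λ : Set (Set S)}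

abbrev toMeasurableSpace (hΛ : IsSubSigmaAlgebra Λ) : MeasurableSpace S where
  MeasurableSet' := (· ∈ Λ)
  measurableSet_empty := hΛ.empty_mem
  measurableSet_compl := hΛ.compl_mem
  measurableSet_iUnion := hΛ.iUnion_mem

lemma univ_mem (hΛ : IsSubSigmaAlgebra Λ) : univ ∈ Λ :=
  @MeasurableSet.univ S hΛ.toMeasurableSpace

lemma isPiSystem (hΛ : IsSubSigmaAlgebra Λ) : IsPiSystem Λ :=
  @isPiSystem_measurableSet S hΛ.toMeasurableSpace

lemma sigmaGen_subset (hΛ : IsSubSigmaAlgebra Λ) {U : Set (Set S)} (hU : U ⊆ Λ) :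
    sigmaGen U ⊆ Λ :=
  fun A hA => generateFrom_le (m := hΛ.toMeasurableSpace) hU A hA

end IsSubSigmaAlgebra

lemma isSubSigmaAlgebra_sigmaGen {U : Set (Set S)} (hU : ∀ A ∈ U, MeasurableSet A) :
    IsSubSigmaAlgebra (sigmaGen U) where
  subset_meas A hA := generateFrom_le hU A hA
  empty_mem := @MeasurableSet.empty S (generateFrom U)
  compl_mem _ hA := MeasurableSet.compl (m := generateFrom U) hA
  iUnion_mem _ hf := MeasurableSet.iUnion (m := generateFrom U) hf

lemma isSubSigmaAlgebra_sigmaCl {R : Set (S × S)}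
    (hR : ∀ ⦃s t⦄, (s, t) ∈ R → (t, s) ∈ R) : IsSubSigmaAlgebra (sigmaCl R) where
  subset_meas _ hA := hA.1
  empty_mem := ⟨MeasurableSet.empty, fun _ hx => hx.elim⟩
  compl_mem _ hA := ⟨hA.1.compl, hA.2.compl hR⟩
  iUnion_mem f hf := by
    refine ⟨.iUnion fun n => (hf n).1, fun x hx s hxs => ?_⟩
    obtain ⟨n, hxn⟩ := mem_iUnion.mp hx
    exact mem_iUnion.mpr ⟨n, (hf n).2 hxn hxs⟩

section Kernels

variable (M : LMP S L)

instance (a : L) (s : S) : IsFiniteMeasure (M.τ a s) :=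
  ⟨(M.prob_le_one a s).trans_lt ENNReal.one_lt_top⟩

variable {M}

lemma relT_swap {Λ : Set (Set S)} {s t : S} (h : (s, t) ∈ M.relT Λ) : (t, s) ∈ M.relT Λ :=
  fun a E hE => (h a E hE).symm

variable (M)

lemma relT_anti : Antitone M.relT :=
  fun _ _ h _ hp a E hE => hp a E (h hE)

lemma Gop_mono : Monotone M.Gop :=
  fun _ _ h _ hA => ⟨hA.1, fun _ hx _ hxs => hA.2 hx (M.relT_anti h hxs)⟩

lemma isSubSigmaAlgebra_Gop (Λ : Set (Set S)) : IsSubSigmaAlgebra (M.Gop Λ) :=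
  isSubSigmaAlgebra_sigmaCl fun _ _ => relT_swap

lemma isSubSigmaAlgebra_Giter {Λ : Set (Set S)} (hΛ : IsSubSigmaAlgebra Λ) (α : Ordinal) :
    IsSubSigmaAlgebra (M.Giter Λ α) := by
  induction α using Ordinal.limitRecOn with
  | zero => rwa [Giter_zero]
  | add_one α _ => rw [Giter_succ]; exact M.isSubSigmaAlgebra_Gop _
  | limit α hα ih =>
    rw [Giter_of_isSuccLimit _ _ hα]
    refine isSubSigmaAlgebra_sigmaGen fun A hA => ?_
    obtain ⟨β, hβ, hAβ⟩ := mem_iUnion₂.mp hA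
    exact (ih β hβ).subset_meas A hAβ

lemma rel_Gop {Λ : Set (Set S)} (hΛ : ∀ A ∈ Λ, MeasurableSet A) :
    rel (M.Gop Λ) = M.relT Λ := by
  ext ⟨s, t⟩
  refine ⟨fun hst a E hE => ?_, fun hst A hA =>
    ⟨fun hs => hA.2 hs hst, fun ht => hA.2 ht (relT_swap hst)⟩⟩
  have hlevel : ∀ c, {u | c < M.τ a u E} ∈ M.Gop Λ := fun c =>
    ⟨measurableSet_lt measurable_const (M.measurable_eval a E (hΛ E hE)),
      fun x hx u hxu => show c < M.τ a u E from hxu a E hE ▸ hx⟩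
  exact le_antisymm (le_of_forall_lt fun c hc => (hst _ (hlevel c)).mp hc)
    (le_of_forall_lt fun c hc => (hst _ (hlevel c)).mpr hc)

lemma relT_sigmaGen {U : Set (Set S)} (hU : ∀ A ∈ U, MeasurableSet A) (hpi : IsPiSystem U)
    (huniv : univ ∈ U) : M.relT (sigmaGen U) = M.relT U := by
  refine (M.relT_anti fun A => measurableSet_generateFrom).antisymm ?_
  rintro ⟨s, t⟩ hst a E hE
  exact ext_on_measurableSpace_of_generate_finite _ U (fun B hB => hst a B hB)
    (generateFrom_le hU) rfl hpi (hst a univ huniv) hE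

lemma subset_Gop_of_relT_subset_rel {Λ : Set (Set S)} (hΛ : ∀ A ∈ Λ, MeasurableSet A)
    (h : M.relT Λ ⊆ rel Λ) : Λ ⊆ M.Gop Λ :=
  fun A hA => ⟨hΛ A hA, fun _ hx _ hxs => (h hxs A hA).mp hx⟩

lemma Giter_subset_Gop_Giter_and_le {Λ : Set (Set S)} (hΛ : Λ ⊆ M.Gop Λ) (α : Ordinal) :
    M.Giter Λ α ⊆ M.Gop (M.Giter Λ α) ∧ ∀ β ≤ α, M.Giter Λ β ⊆ M.Giter Λ α := by
  induction α using Ordinal.limitRecOn with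
  | zero =>
    rw [Giter_zero]
    exact ⟨hΛ, fun β hβ => by rw [nonpos_iff_eq_zero.mp hβ, Giter_zero]⟩
  | add_one α ih =>
    rw [Giter_succ]
    refine ⟨M.Gop_mono ih.1, fun β hβ => ?_⟩
    rcases hβ.eq_or_lt with rfl | hβ
    · rw [Giter_succ]
    · exact (ih.2 β (Order.lt_add_one_iff.mp hβ)).trans ih.1
  | limit α hα ih =>
    have hle : ∀ β ≤ α, M.Giter Λ β ⊆ M.Giter Λ α := by
      intro β hβ
      rcases hβ.eq_or_lt with rfl | hβ
      · rfl
      · rw [Giter_of_isSuccLimit _ _ hα]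
        exact fun A hA => measurableSet_generateFrom (mem_iUnion₂.mpr ⟨β, hβ, hA⟩)
    refine ⟨?_, hle⟩
    conv_lhs => rw [Giter_of_isSuccLimit _ _ hα]
    refine (M.isSubSigmaAlgebra_Gop _).sigmaGen_subset (iUnion₂_subset fun β hβ => ?_)
    exact (ih β hβ).1.trans (M.Gop_mono (hle β hβ.le))

lemma Giter_mono {Λ : Set (Set S)} (hΛ : Λ ⊆ M.Gop Λ) : Monotone (M.Giter Λ) :=
  fun β α hβα => (M.Giter_subset_Gop_Giter_and_le hΛ α).2 β hβα

lemma rel_biUnion_Giter_eq_relT {Λ : Set (Set S)}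
    (hmono : Monotone (M.Giter Λ : Ordinal.{u} → Set (Set S)))
    (hmeas : ∀ α : Ordinal.{u}, ∀ A ∈ M.Giter Λ α, MeasurableSet A) {lam : Ordinal.{u}}
    (hlam : Order.IsSuccLimit lam) :
    rel (⋃ β < lam, M.Giter Λ β) = M.relT (⋃ β < lam, M.Giter Λ β) := by
  apply subset_antisymm
  · rintro p hp a E hE
    obtain ⟨β, hβ, hEβ⟩ := mem_iUnion₂.mp hE
    have : p ∈ rel (M.Giter Λ (β + 1)) :=
      rel_anti (subset_iUnion₂ (s := fun γ (_ : γ < lam) => M.Giter Λ γ) _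
        (hlam.add_one_lt hβ)) hp
    rw [Giter_succ, M.rel_Gop (hmeas β)] at this
    exact this a E hEβ
  · rintro p hp A hA
    obtain ⟨β, hβ, hAβ⟩ := mem_iUnion₂.mp hA
    have : p ∈ rel (M.Giter Λ (β + 1)) := by
      rw [Giter_succ, M.rel_Gop (hmeas β)]
      exact M.relT_anti (subset_iUnion₂ (s := fun γ (_ : γ < lam) => M.Giter Λ γ) _ hβ) hp
    exact this A (hmono (Order.le_succ β) hAβ)

end Kernels

end LMP

open LMP in
theorem rel_Giter_eq_relT_Giter_of_isLimit_general
    {S L : Type*} [MeasurableSpace S]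
    (M : LMP S L) (Sig₀ : Set (Set S)) (hSig₀ : IsSubSigmaAlgebra Sig₀)
    (h : rel Sig₀ = M.relT Sig₀) (lam : Ordinal) (hlam : Order.IsSuccLimit lam) :
    rel (M.Giter Sig₀ lam) = M.relT (M.Giter Sig₀ lam) := by
  have hsub := M.isSubSigmaAlgebra_Giter hSig₀
  have hmono : Monotone (M.Giter Sig₀) :=
    M.Giter_mono (M.subset_Gop_of_relT_subset_rel hSig₀.subset_meas h.ge)
  have hU_meas : ∀ A ∈ ⋃ β < lam, M.Giter Sig₀ β, MeasurableSet A := fun A hA => by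
    obtain ⟨β, -, hAβ⟩ := mem_iUnion₂.mp hA
    exact (hsub β).subset_meas A hAβ
  have hU_pi : IsPiSystem (⋃ β < lam, M.Giter Sig₀ β) := by
    rw [← iUnion_subtype (· < lam) fun β => M.Giter Sig₀ β]
    exact isPiSystem_iUnion_of_monotone _ (fun β => (hsub β).isPiSystem)
      fun _ _ hβγ => hmono hβγ
  have hU_univ : univ ∈ ⋃ β < lam, M.Giter Sig₀ β :=
    mem_iUnion₂.mpr ⟨0, hlam.bot_lt, (hsub 0).univ_mem⟩
  rw [Giter_of_isSuccLimit _ _ hlam, rel_sigmaGen, M.relT_sigmaGen hU_meas hU_pi hU_univ]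
  exact M.rel_biUnion_Giter_eq_relT hmono (fun α => (hsub α).subset_meas) hlam

open LMP in
/-- If `Sig₀ ⊆ Σ` is a sub-σ-algebra with `R(Sig₀) = R^T(Sig₀)`, then for every limit ordinal `λ`,
`R(Σ_λ) = R^T(Σ_λ)`, where `Σ_α := 𝒢^α(Sig₀)`. -/
theorem rel_Giter_eq_relT_Giter_of_isLimit
    {S L : Type*} [MeasurableSpace S] [Countable L]
    (M : LMP S L) (Sig₀ : Set (Set S)) (hSig₀ : IsSubSigmaAlgebra Sig₀)
    (h : rel Sig₀ = M.relT Sig₀) (lam : Ordinal) (hlam : Order.IsSuccLimit lam) :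
    rel (M.Giter Sig₀ lam) = M.relT (M.Giter Sig₀ lam) :=
  rel_Giter_eq_relT_Giter_of_isLimit_general M Sig₀ hSig₀ h lam hlam
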